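/- arXiv:1604.06547 — 7 statements merged into one kernel-verified Lean document; each statement's English description precedes it below -/
import Mathlib

section
/- For any p > 1 and 0 < |c| < λ there exist constants K > 0 and ε₀ > 0 such that for all 0 < ε < ε₀ and every solution (u,v) of the system, the function H_ε(t) = E(t) − ε v v' + pε u u' + ((p+1)λε/(2c))(u'v − uv') satisfies dH_ε/dt ≤ −δ(u² + v² + u'² + v'²) for some δ > 0 depending only on λ, c, p, ε, where E = (1/2)(u'² + v'² + λ(u² + v²)) + cuv. -/
/-!
Along a solution, `dH_ε/dt` is a quadratic form in `(u, v, u', v')` once `u''` and `v''` are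
eliminated through the equations. The coefficient `(p + 1)λε/(2c)` of the coupling term
`u'v - uv'` is what makes `u²` and `v²` both enter with coefficient `-λε(p - 1)/2`; the remaining
`uv` term costs only `ε(p - 1)|c|/2 (u² + v²)`, so `|c| < λ` leaves the margin
`-εm (u² + v²)` with `m = (p - 1)(λ - |c|)/2`. Young's inequality with weight `m` spends half of
that margin on the cross terms `uu'` and `vu'`, at the price of an `O(ε)` multiple of `u'²`,
which the `-u'²` coming from the damping absorbs once `ε` is small.
-/

noncomputable def lyapunov (lam c p ε U V U' V' : ℝ) : ℝ :=
  (1/2) * (U'^2 + V'^2 + lam * (U^2 + V^2)) + c * U * V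
    - ε * (V * V') + p * ε * (U * U') + ((p + 1) * lam * ε / (2 * c)) * (U' * V - U * V')

noncomputable def lyapunovRate (lam c p ε U V U' V' : ℝ) : ℝ :=
  (p * ε - 1) * U'^2 - ε * V'^2 - lam * ε * (p - 1) / 2 * (U^2 + V^2)
    - ε * (p - 1) * c * (U * V) - p * ε * (U * U') - (p + 1) * lam * ε / (2 * c) * (V * U')

variable {lam c p ε : ℝ}

theorem hasDerivAt_lyapunov (hc : c ≠ 0) {u v u' v' u'' v'' : ℝ → ℝ} {t : ℝ}
    (hu : HasDerivAt u (u' t) t) (hu' : HasDerivAt u' (u'' t) t)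
    (hv : HasDerivAt v (v' t) t) (hv' : HasDerivAt v' (v'' t) t)
    (hode₁ : u'' t + u' t + lam * u t + c * v t = 0) (hode₂ : v'' t + lam * v t + c * u t = 0) :
    HasDerivAt (fun t => lyapunov lam c p ε (u t) (v t) (u' t) (v' t))
      (lyapunovRate lam c p ε (u t) (v t) (u' t) (v' t)) t := by
  have h := (((((((hu'.pow 2).add (hv'.pow 2)).add (((hu.pow 2).add (hv.pow 2)).const_mul lam)).const_mul
    (1/2 : ℝ)).add ((hu.const_mul c).mul hv)).sub ((hv.mul hv').const_mul ε)).add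
    ((hu.mul hu').const_mul (p * ε))).add
    (((hu'.mul hv).sub (hu.mul hv')).const_mul ((p + 1) * lam * ε / (2 * c)))
  refine h.congr_deriv ?_
  have hu'' : u'' t = -(u' t + lam * u t + c * v t) := by linarith
  have hv'' : v'' t = -(lam * v t + c * u t) := by linarith
  rw [hu'', hv'']
  unfold lyapunovRate
  field_simp
  ring

theorem lyapunovRate_le {η : ℝ} (hp : 1 ≤ p) (hε : 0 ≤ ε) (hη : 0 < η) (U V U' V' : ℝ) :
    lyapunovRate lam c p ε U V U' V' ≤
      -(ε * ((p - 1) * (lam - |c|) - η) / 2) * (U^2 + V^2) - ε * V'^2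
        - (1 - ε * (p + (p^2 + ((p + 1) * lam / (2 * c))^2) * η⁻¹ / 2)) * U'^2 := by
  have hUV : -(2 * c * (U * V)) ≤ |c| * (U^2 + V^2) := by
    cases abs_cases c <;> nlinarith [sq_nonneg (U + V), sq_nonneg (U - V)]
  have hUU' := two_mul_le_add_mul_sq (a := U) (b := -p * U') hη
  have hVU' := two_mul_le_add_mul_sq (a := V) (b := -((p + 1) * lam / (2 * c)) * U') hη
  unfold lyapunovRate
  linear_combination (ε * (p - 1) / 2) * hUV + (ε / 2) * hUU' + (ε / 2) * hVU'

theorem stmt_5_general (lam c p : ℝ) (hc : 0 < |c|) (hclam : |c| < lam)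
    (hp : 1 < p) :
    ∃ K ε₀ : ℝ, 0 < K ∧ 0 < ε₀ ∧
      ∀ ε : ℝ, 0 < ε → ε < ε₀ →
        ∃ δ : ℝ, 0 < δ ∧
          ∀ (u v u' v' u'' v'' : ℝ → ℝ),
            (∀ t, HasDerivAt u (u' t) t) → (∀ t, HasDerivAt u' (u'' t) t) →
            (∀ t, HasDerivAt v (v' t) t) → (∀ t, HasDerivAt v' (v'' t) t) →
            (∀ t, u'' t + u' t + lam * u t + c * v t = 0) →
            (∀ t, v'' t + lam * v t + c * u t = 0) →
            ∀ t, deriv (fun t =>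
                ((1/2) * ((u' t)^2 + (v' t)^2 + lam * ((u t)^2 + (v t)^2))
                  + c * u t * v t)
                - ε * (v t * v' t) + p * ε * (u t * u' t)
                + ((p + 1) * lam * ε / (2 * c)) * (u' t * v t - u t * v' t)) t
              ≤ -δ * ((u t)^2 + (v t)^2 + (u' t)^2 + (v' t)^2) := by
  set m := (p - 1) * (lam - |c|) / 2
  have hm : 0 < m := by have := sub_pos.2 hp; have := sub_pos.2 hclam; positivity
  set C := p + (p^2 + ((p + 1) * lam / (2 * c))^2) * m⁻¹ / 2 with hC_def
  have hC : p ≤ C := le_add_of_nonneg_right (by positivity)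
  refine ⟨1, 1 / (2 * C), one_pos, by positivity, fun ε hε hε₀ => ⟨min (ε * m / 2) ε, by positivity, ?_⟩⟩
  intro u v u' v' u'' v'' hu hu' hv hv' hode₁ hode₂ t
  have hεC : ε * C < 1 / 2 := by rw [lt_div_iff₀ (by positivity)] at hε₀; linarith
  have hε' : ε < 1 / 2 := by nlinarith
  set δ := min (ε * m / 2) ε
  have hδ₁ : δ ≤ ε * m / 2 := min_le_left _ _
  have hδ₂ : δ ≤ ε := min_le_right _ _
  refine (hasDerivAt_lyapunov (p := p) (ε := ε) (abs_pos.mp hc) (hu t) (hu' t) (hv t) (hv' t)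
    (hode₁ t) (hode₂ t)).deriv.le.trans <| (lyapunovRate_le hp.le hε.le hm _ _ _ _).trans ?_
  rw [show (p - 1) * (lam - |c|) = 2 * m by ring, ← hC_def]
  linarith [mul_le_mul_of_nonneg_right hδ₁ (add_nonneg (sq_nonneg (u t)) (sq_nonneg (v t))),
    mul_le_mul_of_nonneg_right hδ₂ (sq_nonneg (v' t)),
    mul_le_mul_of_nonneg_right (show δ ≤ 1 - ε * C by linarith) (sq_nonneg (u' t))]

theorem stmt_5 (lam c p : ℝ) (hlam : 0 < lam) (hc : 0 < |c|) (hclam : |c| < lam)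
    (hp : 1 < p) :
    ∃ K ε₀ : ℝ, 0 < K ∧ 0 < ε₀ ∧
      ∀ ε : ℝ, 0 < ε → ε < ε₀ →
        ∃ δ : ℝ, 0 < δ ∧
          ∀ (u v u' v' u'' v'' : ℝ → ℝ),
            (∀ t, HasDerivAt u (u' t) t) → (∀ t, HasDerivAt u' (u'' t) t) →
            (∀ t, HasDerivAt v (v' t) t) → (∀ t, HasDerivAt v' (v'' t) t) →
            (∀ t, u'' t + u' t + lam * u t + c * v t = 0) →
            (∀ t, v'' t + lam * v t + c * u t = 0) →
            ∀ t, deriv (fun t =>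
                ((1/2) * ((u' t)^2 + (v' t)^2 + lam * ((u t)^2 + (v t)^2))
                  + c * u t * v t)
                - ε * (v t * v' t) + p * ε * (u t * u' t)
                + ((p + 1) * lam * ε / (2 * c)) * (u' t * v t - u t * v' t)) t
              ≤ -δ * ((u t)^2 + (v t)^2 + (u' t)^2 + (v' t)^2) :=
  stmt_5_general lam c p hc hclam hp
end

section
/- Every solution of the system u'' + u' + λu + cv = 0, v'' + λv + cu = 0 with 0 < |c| < λ decays exponentially: there exist C ≥ 1 and γ > 0 depending only on λ, c such that u(t)² + v(t)² + u'(t)² + v'(t)² ≤ C e^{−γt}(u(0)² + v(0)² + u'(0)² + v'(0)²) for all t ≥ 0. -/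
/-!
The energy `E = u'² + v'² + λ(u² + v²) + 2cuv` is positive definite because `|c| < λ`, and
along solutions `E' = -2u'²`: only `u'` is damped directly. Adding small cross terms
`ε(a uu' + b uv' + s vu' - δ vv')` produces a Lyapunov function `V`, still comparable to
`N = u² + v² + u'² + v'²`, with `V' ≤ -κ N ≤ -(κ / M) V`; Grönwall's inequality then gives
exponential decay of `V`, hence of `N`.
-/

open Real Topology

theorem le_mul_exp_of_deriv_le_mul {f f' : ℝ → ℝ} {K : ℝ} (hf : ∀ t, HasDerivAt f (f' t) t)
    (hK : ∀ t, f' t ≤ K * f t) {t : ℝ} (ht : 0 ≤ t) : f t ≤ f 0 * exp (K * t) := by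
  have := le_gronwallBound_of_liminf_deriv_right_le (f' := f') (ε := 0)
    (fun x _ => (hf x).continuousAt.continuousWithinAt)
    (fun x _ _ hr => (hf x).hasDerivWithinAt.liminf_right_slope_le hr) le_rfl
    (fun x _ => by simpa using hK x) t ⟨ht, le_rfl⟩
  simpa [gronwallBound_ε0] using this

theorem le_mul_exp_of_lyapunov {N V V' : ℝ → ℝ} {m M κ : ℝ} (hm : 0 < m) (hM : 0 < M)
    (hκ : 0 ≤ κ) (hV : ∀ t, HasDerivAt V (V' t) t) (hlow : ∀ t, m * N t ≤ V t)
    (hup : ∀ t, V t ≤ M * N t) (hV' : ∀ t, V' t ≤ -κ * N t) {t : ℝ} (ht : 0 ≤ t) :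
    N t ≤ M / m * exp (-(κ / M) * t) * N 0 := by
  have hdecay : V t ≤ V 0 * exp (-(κ / M) * t) := by
    refine le_mul_exp_of_deriv_le_mul hV (fun s => ?_) ht
    have : κ / M * V s ≤ κ * N s := by
      calc κ / M * V s ≤ κ / M * (M * N s) := by gcongr; exact hup s
        _ = κ * N s := by field_simp
    linarith [hV' s]
  refine le_of_mul_le_mul_left ?_ hm
  calc m * N t ≤ V t := hlow t
    _ ≤ V 0 * exp (-(κ / M) * t) := hdecay
    _ ≤ M * N 0 * exp (-(κ / M) * t) := by gcongr; exact hup 0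
    _ = m * (M / m * exp (-(κ / M) * t) * N 0) := by field_simp

theorem eventually_mul_lt (X : ℝ) {Y : ℝ} (hY : 0 < Y) : ∀ᶠ ε in 𝓝 (0 : ℝ), ε * X < Y :=
  (continuous_id.mul continuous_const).continuousAt.eventually_lt continuousAt_const
    (by simpa using hY)

theorem quadratic_form_nonneg {A B k : ℝ} (hB : 0 < B) (hk : k ^ 2 ≤ A * B) (x y : ℝ) :
    0 ≤ A * x ^ 2 + 2 * k * (x * y) + B * y ^ 2 := by
  nlinarith [sq_nonneg (k * x + B * y), mul_nonneg (sub_nonneg.2 hk) (sq_nonneg x)]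

namespace CoupledOscillators

variable (L c a b s δ : ℝ)

def lyapunov (u v p q : ℝ) : ℝ :=
  p ^ 2 + q ^ 2 + L * (u ^ 2 + v ^ 2) + 2 * c * (u * v)
    + a * (u * p) + b * (u * q) + s * (v * p) - δ * (v * q)

def dissipation (u v p q : ℝ) : ℝ :=
  (2 - a) * p ^ 2 + δ * q ^ 2 + (a * L + b * c) * u ^ 2 + (s * c - δ * L) * v ^ 2
    + a * (u * p) + s * (v * p) - (b + s) * (p * q) + (a * c + (b + s) * L - δ * c) * (u * v)

variable {L c a b s δ}

theorem hasDerivAt_lyapunov {u v u' v' u'' v'' : ℝ → ℝ} (hu : ∀ t, HasDerivAt u (u' t) t)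
    (hu' : ∀ t, HasDerivAt u' (u'' t) t) (hv : ∀ t, HasDerivAt v (v' t) t)
    (hv' : ∀ t, HasDerivAt v' (v'' t) t) (hequ : ∀ t, u'' t + u' t + L * u t + c * v t = 0)
    (heqv : ∀ t, v'' t + L * v t + c * u t = 0) (t : ℝ) :
    HasDerivAt (fun t => lyapunov L c a b s δ (u t) (v t) (u' t) (v' t))
      (-dissipation L c a b s δ (u t) (v t) (u' t) (v' t)) t := by
  have H : HasDerivAt (fun t => lyapunov L c a b s δ (u t) (v t) (u' t) (v' t)) _ t :=
    ((((((((hu' t).pow 2).add ((hv' t).pow 2)).add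
      ((((hu t).pow 2).add ((hv t).pow 2)).const_mul L)).add
      (((hu t).mul (hv t)).const_mul (2 * c))).add (((hu t).mul (hu' t)).const_mul a)).add
      (((hu t).mul (hv' t)).const_mul b)).add (((hv t).mul (hu' t)).const_mul s)).sub
      (((hv t).mul (hv' t)).const_mul δ)
  refine H.congr_deriv ?_
  simp only [dissipation]
  linear_combination (2 * u' t + a * u t + s * v t) * hequ t
    + (2 * v' t + b * u t - δ * v t) * heqv t

theorem le_dissipation {κ : ℝ} (hcancel : a * c + (b + s) * L = δ * c)
    (hu : s * c ≤ a * L + b * c) (hv : 2 * δ * L ≤ s * c) (ha : a ≤ 1 / 4)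
    (hup : 2 * a ^ 2 ≤ s * c) (hvp : 8 * s ^ 2 ≤ s * c) (hpq : 2 * (b + s) ^ 2 ≤ δ)
    (hκ : κ ≤ 1) (hκs : 4 * κ ≤ s * c) (hκδ : 2 * κ ≤ δ) (u v p q : ℝ) :
    κ * (u ^ 2 + v ^ 2 + p ^ 2 + q ^ 2) ≤ dissipation L c a b s δ u v p q := by
  have h_up : 0 ≤ s * c / 2 * u ^ 2 + 2 * (a / 2) * (u * p) + 1 / 4 * p ^ 2 :=
    quadratic_form_nonneg (by norm_num) (by linarith) u p
  have h_vp : 0 ≤ s * c / 8 * v ^ 2 + 2 * (s / 2) * (v * p) + 1 / 4 * p ^ 2 :=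
    quadratic_form_nonneg (by norm_num) (by linarith) v p
  have h_qp : 0 ≤ δ / 2 * q ^ 2 + 2 * (-(b + s) / 2) * (q * p) + 1 / 4 * p ^ 2 :=
    quadratic_form_nonneg (by norm_num) (by linarith) q p
  have hsc : 0 ≤ s * c := by linarith [sq_nonneg s]
  simp only [dissipation, hcancel, sub_self, zero_mul, add_zero]
  linarith [mul_nonneg (by linarith : 0 ≤ a * L + b * c - s * c / 2 - κ) (sq_nonneg u),
    mul_nonneg (by linarith : 0 ≤ s * c - δ * L - s * c / 8 - κ) (sq_nonneg v),
    mul_nonneg (by linarith : 0 ≤ 2 - a - 3 / 4 - κ) (sq_nonneg p),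
    mul_nonneg (by linarith : 0 ≤ δ / 2 - κ) (sq_nonneg q)]

theorem le_lyapunov {m : ℝ} (hm : m ≤ 1 / 2) (hu : a ^ 2 + b ^ 2 + m ≤ L - |c|)
    (hv : s ^ 2 + δ ^ 2 + m ≤ L - |c|) (u v p q : ℝ) :
    m * (u ^ 2 + v ^ 2 + p ^ 2 + q ^ 2) ≤ lyapunov L c a b s δ u v p q := by
  have h_uv : -(|c| * (u ^ 2 + v ^ 2)) ≤ 2 * c * (u * v) := by
    rcases abs_cases c with ⟨h, _⟩ | ⟨h, _⟩ <;> rw [h] <;>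
      nlinarith [sq_nonneg (u + v), sq_nonneg (u - v)]
  simp only [lyapunov]
  nlinarith [sq_nonneg (a * u + p / 2), sq_nonneg (b * u + q / 2), sq_nonneg (s * v + p / 2),
    sq_nonneg (δ * v - q / 2),
    mul_nonneg (by linarith : 0 ≤ L - |c| - a ^ 2 - b ^ 2 - m) (sq_nonneg u),
    mul_nonneg (by linarith : 0 ≤ L - |c| - s ^ 2 - δ ^ 2 - m) (sq_nonneg v),
    mul_nonneg (by linarith : 0 ≤ 1 / 2 - m) (sq_nonneg p),
    mul_nonneg (by linarith : 0 ≤ 1 / 2 - m) (sq_nonneg q)]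

theorem lyapunov_le (hL : 0 ≤ L) (u v p q : ℝ) :
    lyapunov L c a b s δ u v p q
      ≤ (2 + L + c ^ 2 + a ^ 2 + b ^ 2 + s ^ 2 + δ ^ 2) * (u ^ 2 + v ^ 2 + p ^ 2 + q ^ 2) := by
  simp only [lyapunov]
  nlinarith [sq_nonneg (c * u - v), sq_nonneg (a * u - p), sq_nonneg (b * u - q),
    sq_nonneg (s * v - p), sq_nonneg (δ * v + q), mul_nonneg hL (sq_nonneg p),
    mul_nonneg hL (sq_nonneg q), sq_nonneg u, sq_nonneg v,
    mul_nonneg (sq_nonneg c) (sq_nonneg v), mul_nonneg (sq_nonneg a) (sq_nonneg v)]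

theorem exists_lyapunov_coeffs (hc : 0 < |c|) (hcL : |c| < L) :
    ∃ a b s δ κ m : ℝ, 0 < κ ∧ 0 < m ∧ ∀ u v p q : ℝ,
      κ * (u ^ 2 + v ^ 2 + p ^ 2 + q ^ 2) ≤ dissipation L c a b s δ u v p q ∧
      m * (u ^ 2 + v ^ 2 + p ^ 2 + q ^ 2) ≤ lyapunov L c a b s δ u v p q := by
  have hL : 0 < L := hc.trans hcL
  have hc2 : 0 < c ^ 2 := by simpa [sq_abs] using pow_pos hc 2
  have hD : 0 < L ^ 2 - c ^ 2 := by nlinarith [sq_abs c, abs_nonneg c]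
  have hgap : 0 < (L - |c|) / 2 := by linarith
  -- The constraints on `(a, b, s, δ)` that are linear in the coefficients (cancellation of the
  -- `uv` term, positivity of the `u²` and `v²` terms) are met by `(a₀, b₀, c, δ₀)`; the quadratic
  -- ones then hold after scaling that direction by a small `ε`.
  set a₀ := 2 * c ^ 2 * L / (L ^ 2 - c ^ 2)
  set δ₀ := c ^ 2 / (2 * L)
  set b₀ := (δ₀ - a₀) * c / L - c
  have hδ₀ : 0 < δ₀ := by positivity
  have hcancel : a₀ * c + (b₀ + c) * L = δ₀ * c := by simp only [b₀]; field_simp; ring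
  have hu : c ^ 2 ≤ a₀ * L + b₀ * c := by
    have : a₀ * L + b₀ * c - c ^ 2 = c ^ 4 / (2 * L ^ 2) := by
      simp only [b₀, a₀, δ₀]; field_simp; ring
    linarith [(by positivity : 0 ≤ c ^ 4 / (2 * L ^ 2))]
  have hv : 2 * δ₀ * L = c ^ 2 := by simp only [δ₀]; field_simp
  obtain ⟨ε, hε, hup, hvp, hpq, ha, hε1, hgu, hgv⟩ : ∃ ε : ℝ, 0 < ε ∧ ε * (2 * a₀ ^ 2) < c ^ 2 ∧
      ε * (8 * c ^ 2) < c ^ 2 ∧ ε * (2 * (b₀ + c) ^ 2) < δ₀ ∧ ε * a₀ < 1 / 4 ∧ ε < 1 ∧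
      ε * (a₀ ^ 2 + b₀ ^ 2) < (L - |c|) / 2 ∧ ε * (c ^ 2 + δ₀ ^ 2) < (L - |c|) / 2 := by
    refine (eventually_mem_nhdsWithin.and (eventually_nhdsWithin_of_eventually_nhds ?_)).exists
      (f := 𝓝[>] 0)
    exact (eventually_mul_lt _ hc2).and <| (eventually_mul_lt _ hc2).and <|
      (eventually_mul_lt _ hδ₀).and <| (eventually_mul_lt _ (by norm_num)).and <|
      (eventually_lt_nhds one_pos).and <| (eventually_mul_lt _ hgap).and
      (eventually_mul_lt _ hgap)
  set κ := min (min 1 (ε * c ^ 2 / 4)) (ε * δ₀ / 2)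
  have hκ1 : κ ≤ 1 := (min_le_left _ _).trans (min_le_left _ _)
  have hκs : κ ≤ ε * c ^ 2 / 4 := (min_le_left _ _).trans (min_le_right _ _)
  have hκδ : κ ≤ ε * δ₀ / 2 := min_le_right _ _
  set m := min (1 / 2) ((L - |c|) / 2)
  have hm : m ≤ (L - |c|) / 2 := min_le_right _ _
  refine ⟨ε * a₀, ε * b₀, ε * c, ε * δ₀, κ, m, lt_min (lt_min one_pos (by positivity))
    (by positivity), by positivity, fun u v p q => ⟨?_, ?_⟩⟩
  · exact le_dissipation (by linear_combination ε * hcancel)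
      (by linarith [mul_le_mul_of_nonneg_left hu hε.le]) (by linear_combination ε * hv)
      ha.le (by linarith [mul_le_mul_of_nonneg_left hup.le hε.le])
      (by linarith [mul_le_mul_of_nonneg_left hvp.le hε.le])
      (by linarith [mul_le_mul_of_nonneg_left hpq.le hε.le]) hκ1 (by linarith) (by linarith)
      u v p q
  · have hε_gap : ε * ((L - |c|) / 2) ≤ (L - |c|) / 2 := mul_le_of_le_one_left hgap.le hε1.le
    exact le_lyapunov (min_le_left _ _)
      (by linarith [mul_le_mul_of_nonneg_left hgu.le hε.le])
      (by linarith [mul_le_mul_of_nonneg_left hgv.le hε.le]) u v p q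

end CoupledOscillators

theorem stmt_6_general (lam c : ℝ) (hc : 0 < |c|) (hclam : |c| < lam) :
    ∃ C γ : ℝ, 1 ≤ C ∧ 0 < γ ∧
      ∀ (u v u' v' u'' v'' : ℝ → ℝ),
        (∀ t, HasDerivAt u (u' t) t) → (∀ t, HasDerivAt u' (u'' t) t) →
        (∀ t, HasDerivAt v (v' t) t) → (∀ t, HasDerivAt v' (v'' t) t) →
        (∀ t, u'' t + u' t + lam * u t + c * v t = 0) →
        (∀ t, v'' t + lam * v t + c * u t = 0) →
        ∀ t, 0 ≤ t →
          (u t)^2 + (v t)^2 + (u' t)^2 + (v' t)^2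
            ≤ C * Real.exp (-γ * t) * ((u 0)^2 + (v 0)^2 + (u' 0)^2 + (v' 0)^2) := by
  obtain ⟨a, b, s, δ, κ, m, hκ, hm, hbounds⟩ :=
    CoupledOscillators.exists_lyapunov_coeffs hc hclam
  have hlam : 0 < lam := hc.trans hclam
  set M := 2 + lam + c ^ 2 + a ^ 2 + b ^ 2 + s ^ 2 + δ ^ 2
  have hM : 0 < M := by positivity
  refine ⟨max 1 (M / m), κ / M, le_max_left _ _, by positivity, ?_⟩
  intro u v u' v' u'' v'' hu hu' hv hv' hequ heqv t ht
  calc _ ≤ M / m * exp (-(κ / M) * t) * ((u 0)^2 + (v 0)^2 + (u' 0)^2 + (v' 0)^2) :=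
        le_mul_exp_of_lyapunov hm hM hκ.le
          (CoupledOscillators.hasDerivAt_lyapunov hu hu' hv hv' hequ heqv)
          (fun t => (hbounds _ _ _ _).2)
          (fun t => CoupledOscillators.lyapunov_le hlam.le _ _ _ _)
          (fun t => by linarith [(hbounds (u t) (v t) (u' t) (v' t)).1]) ht
    _ ≤ _ := by gcongr; exact le_max_right _ _

theorem stmt_6 (lam c : ℝ) (hlam : 0 < lam) (hc : 0 < |c|) (hclam : |c| < lam) :
    ∃ C γ : ℝ, 1 ≤ C ∧ 0 < γ ∧
      ∀ (u v u' v' u'' v'' : ℝ → ℝ),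
        (∀ t, HasDerivAt u (u' t) t) → (∀ t, HasDerivAt u' (u'' t) t) →
        (∀ t, HasDerivAt v (v' t) t) → (∀ t, HasDerivAt v' (v'' t) t) →
        (∀ t, u'' t + u' t + lam * u t + c * v t = 0) →
        (∀ t, v'' t + lam * v t + c * u t = 0) →
        ∀ t, 0 ≤ t →
          (u t)^2 + (v t)^2 + (u' t)^2 + (v' t)^2
            ≤ C * Real.exp (-γ * t) * ((u 0)^2 + (v 0)^2 + (u' 0)^2 + (v' 0)^2) :=
  stmt_6_general lam c hc hclam
end

section
/- If ζ = −1/4 + ia with a ∈ ℝ is a root of P(ζ) = (ζ² + λ)(ζ² + ζ + λ) − c², then a = 0. Consequently no root of P has real part exactly −1/4 unless it is real. -/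
theorem stmt_9 (lam c : ℝ) (hlam : 0 < lam) (hc : 0 < |c|) (hclam : |c| < lam)
    (a : ℝ)
    (hroot : ((-1/4 + Complex.I * a)^2 + (lam : ℂ))
        * ((-1/4 + Complex.I * a)^2 + (-1/4 + Complex.I * a) + (lam : ℂ))
        - (c : ℂ)^2 = 0) :
    a = 0 := by
  have h := congrArg Complex.im hroot
  simp [Complex.ext_iff, Complex.add_im, Complex.mul_im, Complex.mul_re, pow_two] at h
  nlinarith [h]
end

section
/- Every root of the characteristic polynomial P(ζ) = (ζ² + λ)(ζ² + ζ + λ) − c² with 0 < |c| < λ has strictly negative real part. -/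
theorem stmt_10 (lam c : ℝ) (hlam : 0 < lam) (hc : 0 < |c|) (hclam : |c| < lam) :
    ∀ z : ℂ, (z^2 + (lam : ℂ)) * (z^2 + z + (lam : ℂ)) - (c : ℂ)^2 = 0 →
      z.re < 0 := by
  intro z hz
  by_contra h
  push_neg at h
  have hc0 : c ≠ 0 := abs_pos.mp hc
  have hc2 : 0 < c^2 := by positivity
  have hclam2 : c^2 < lam^2 := by nlinarith [sq_abs c, hc, hclam]
  rw [Complex.ext_iff] at hz
  obtain ⟨hre, him⟩ := hz
  simp [Complex.mul_re, Complex.mul_im, Complex.add_re, Complex.add_im, pow_two] at hre him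
  rcases eq_or_ne z.im 0 with hy | hy
  · rw [hy] at hre
    nlinarith [hre, h, hlam, hclam2, sq_nonneg z.re, mul_nonneg h h]
  · have key : (z.re * z.re - z.im * z.im + lam) * (4 * z.re + 1) + 2 * z.re ^ 2 = 0 := by
      have hfac : z.im * ((z.re * z.re - z.im * z.im + lam) * (4 * z.re + 1) + 2 * z.re ^ 2)
          = 0 := by linear_combination him
      rcases mul_eq_zero.mp hfac with h' | h'
      · exact absurd h' hy
      · exact h'
    have h41 : (0:ℝ) < 4 * z.re + 1 := by linarith
    have hfinal : c ^ 2 * (4 * z.re + 1) ^ 2 =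
        -4 * z.re ^ 4 - 2 * z.re ^ 3
          - 2 * z.re * z.im ^ 2 * (2 * z.re + 1) * (4 * z.re + 1) ^ 2 := by
      linear_combination (-(4 * z.re + 1) ^ 2) * hre +
        ((z.re * z.re - z.im * z.im + lam) * (4 * z.re + 1) + 2 * z.re ^ 2 + z.re) * key
    nlinarith [hfinal, mul_pos hc2 (pow_pos h41 2), pow_nonneg h 3, pow_nonneg h 4,
      mul_nonneg (mul_nonneg (mul_nonneg h (sq_nonneg z.im)) (by linarith : (0:ℝ) ≤ 2 * z.re + 1)) (pow_nonneg h41.le 2)]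
end

section
/- For 0 < |c| < λ, the minimum over the roots ζ of P(ζ) = (ζ² + λ)(ζ² + ζ + λ) − c² of −Re ζ is strictly less than 1/4. -/
theorem stmt_11 (lam c : ℝ) (hlam : 0 < lam) (hc : 0 < |c|) (hclam : |c| < lam)
    (ζ : Fin 4 → ℂ)
    (hroots : ∀ z : ℂ, (z^2 + (lam : ℂ)) * (z^2 + z + (lam : ℂ)) - (c : ℂ)^2
      = ∏ j, (z - ζ j)) :
    ∃ j, -(ζ j).re < 1/4 := by
  by_contra h
  push_neg at h
  have hz : ∀ z : ℂ, (z^2 + (lam : ℂ)) * (z^2 + z + (lam : ℂ)) - (c : ℂ)^2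
      = (z - ζ 0) * (z - ζ 1) * (z - ζ 2) * (z - ζ 3) := by
    intro z
    rw [hroots z, Fin.prod_univ_four]
  have e1 : ζ 0 + ζ 1 + ζ 2 + ζ 3 = -1 := by
    linear_combination (hz 2 - hz (-2) + 2*(hz (-1)) - 2*(hz 1))/12
  have e2 : ζ 0 * ζ 1 + ζ 0 * ζ 2 + ζ 0 * ζ 3 + ζ 1 * ζ 2 + ζ 1 * ζ 3 + ζ 2 * ζ 3
      = 2 * (lam : ℂ) := by
    linear_combination (hz (-2) - 16*(hz (-1)) + 30*(hz 0) - 16*(hz 1) + hz 2)/24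
  have e3 : ζ 0 * ζ 1 * ζ 2 + ζ 0 * ζ 1 * ζ 3 + ζ 0 * ζ 2 * ζ 3 + ζ 1 * ζ 2 * ζ 3
      = -(lam : ℂ) := by
    linear_combination (hz (-2) - 8*(hz (-1)) + 8*(hz 1) - hz 2)/12
  have hre1 : (ζ 0).re + (ζ 1).re + (ζ 2).re + (ζ 3).re = -1 := by
    have := congrArg Complex.re e1
    simpa using this
  have hq : ∀ j : Fin 4, (ζ j).re ≤ -(1/4) := by
    intro j; have := h j; linarith
  have hre : ∀ j : Fin 4, (ζ j).re = -(1/4) := by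
    intro j
    have h0 := hq 0; have h1 := hq 1; have h2 := hq 2; have h3 := hq 3
    fin_cases j <;> simp <;> linarith
  have A := congrArg Complex.re e2
  have B := congrArg Complex.re e3
  simp [Complex.add_re, Complex.mul_re, Complex.mul_im, hre] at A B
  nlinarith [A, B]
end

section
/- A complex number ζ = s + ia with a ≠ 0 and 4s + 1 ≠ 0 is a root of P(ζ) = (ζ² + λ)(ζ² + ζ + λ) − c² only if a² = λ + (4s³ + 3s²)/(1 + 4s). -/
theorem stmt_12 (lam c s a : ℝ) (hlam : 0 < lam) (ha : a ≠ 0) (hs : 1 + 4*s ≠ 0)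
    (hroot : (((s : ℂ) + Complex.I * a)^2 + (lam : ℂ))
        * (((s : ℂ) + Complex.I * a)^2 + ((s : ℂ) + Complex.I * a) + (lam : ℂ))
        - (c : ℂ)^2 = 0) :
    a^2 = lam + (4*s^3 + 3*s^2) / (1 + 4*s) := by
  have h := congrArg Complex.im hroot
  simp [Complex.ext_iff, pow_two, Complex.add_im, Complex.add_re, Complex.mul_im,
    Complex.mul_re, Complex.I_re, Complex.I_im, Complex.ofReal_re, Complex.ofReal_im] at h
  have h3 : a * ((s*s - a*a + lam)*(2*s+1) + 2*s*(s*s - a*a + s + lam)) = 0 := by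
    linear_combination h
  have h2 := (mul_eq_zero.mp h3).resolve_left ha
  field_simp
  nlinarith [h2]
end

section
/- If (u,v) is a solution of u'' + u' + λu + cv = 0, v'' + λv + cu = 0 with 0 < |c| < λ along which the energy E = (1/2)(u'² + v'² + λ(u² + v²)) + cuv is constant, then u ≡ 0 and v ≡ 0. -/
/-! The energy `E` of the system decreases at rate `u'²`, so constant energy forces `u' ≡ 0`.
Then `u` is constant and the first equation makes `c v` constant, hence `v` constant as `c ≠ 0`.
For constant `u = x`, `v = y` the system reduces to `λ x + c y = 0`, `λ y + c x = 0`,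
whose determinant `λ² - c²` is positive. -/

noncomputable def energy (lam c : ℝ) (u v u' v' : ℝ → ℝ) (t : ℝ) : ℝ :=
  (1/2) * ((u' t)^2 + (v' t)^2 + lam * ((u t)^2 + (v t)^2)) + c * u t * v t

lemma hasDerivAt_energy {lam c t : ℝ} {u v u' v' u'' v'' : ℝ → ℝ}
    (hu : HasDerivAt u (u' t) t) (hu' : HasDerivAt u' (u'' t) t)
    (hv : HasDerivAt v (v' t) t) (hv' : HasDerivAt v' (v'' t) t)
    (heq1 : u'' t + u' t + lam * u t + c * v t = 0)
    (heq2 : v'' t + lam * v t + c * u t = 0) :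
    HasDerivAt (energy lam c u v u' v') (-(u' t)^2) t := by
  have H := (((hu'.pow 2).add (hv'.pow 2)).add (((hu.pow 2).add (hv.pow 2)).const_mul lam)
    |>.const_mul (1/2)).add ((hu.const_mul c).mul hv)
  refine H.congr_deriv ?_
  push_cast
  linear_combination u' t * heq1 + v' t * heq2

lemma eq_zero_of_hasDerivAt_of_forall_eq {f f' : ℝ → ℝ} (hf : ∀ t, HasDerivAt f (f' t) t)
    (hconst : ∀ t, f t = f 0) (t : ℝ) : f' t = 0 :=
  (hf t).unique (funext hconst ▸ hasDerivAt_const t (f 0))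

lemma forall_eq_of_hasDerivAt_of_eq_zero {f f' : ℝ → ℝ} (hf : ∀ t, HasDerivAt f (f' t) t)
    (hf' : ∀ t, f' t = 0) (t : ℝ) : f t = f 0 :=
  is_const_of_deriv_eq_zero (fun s => (hf s).differentiableAt)
    (fun s => (hf s).deriv.trans (hf' s)) t 0

lemma eq_zero_of_linear_system {lam c x y : ℝ} (hclam : |c| < lam)
    (h1 : lam * x + c * y = 0) (h2 : lam * y + c * x = 0) : x = 0 ∧ y = 0 := by
  have hdet : 0 < lam ^ 2 - c ^ 2 := by nlinarith [abs_nonneg c, sq_abs c]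
  have hx : (lam ^ 2 - c ^ 2) * x = 0 := by linear_combination lam * h1 - c * h2
  have hy : (lam ^ 2 - c ^ 2) * y = 0 := by linear_combination lam * h2 - c * h1
  exact ⟨(mul_eq_zero.mp hx).resolve_left hdet.ne', (mul_eq_zero.mp hy).resolve_left hdet.ne'⟩

theorem stmt_14_general (lam c : ℝ) (hc : 0 < |c|) (hclam : |c| < lam)
    (u v u' v' u'' v'' : ℝ → ℝ)
    (hu : ∀ t, HasDerivAt u (u' t) t) (hu' : ∀ t, HasDerivAt u' (u'' t) t)
    (hv : ∀ t, HasDerivAt v (v' t) t) (hv' : ∀ t, HasDerivAt v' (v'' t) t)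
    (heq1 : ∀ t, u'' t + u' t + lam * u t + c * v t = 0)
    (heq2 : ∀ t, v'' t + lam * v t + c * u t = 0)
    (hE : ∀ t : ℝ,
      (1/2) * ((u' t)^2 + (v' t)^2 + lam * ((u t)^2 + (v t)^2)) + c * u t * v t
      = (1/2) * ((u' 0)^2 + (v' 0)^2 + lam * ((u 0)^2 + (v 0)^2)) + c * u 0 * v 0) :
    ∀ t, u t = 0 ∧ v t = 0 := by
  have hu'0 : ∀ t, u' t = 0 := fun t => by
    have h := eq_zero_of_hasDerivAt_of_forall_eq (f := energy lam c u v u' v')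
      (fun s => hasDerivAt_energy (hu s) (hu' s) (hv s) (hv' s) (heq1 s) (heq2 s)) hE t
    simpa using h
  have hu''0 := eq_zero_of_hasDerivAt_of_forall_eq hu' fun t => by rw [hu'0 t, hu'0 0]
  have hu_const := forall_eq_of_hasDerivAt_of_eq_zero hu hu'0
  have hv_const : ∀ t, v t = v 0 := fun t => mul_left_cancel₀ (abs_pos.mp hc) <| by
    linear_combination heq1 t - heq1 0 - hu''0 t + hu''0 0 - hu'0 t + hu'0 0 - lam * hu_const t
  have hv'0 := eq_zero_of_hasDerivAt_of_forall_eq hv hv_const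
  have hv''0 := eq_zero_of_hasDerivAt_of_forall_eq hv' fun t => by rw [hv'0 t, hv'0 0]
  intro t
  refine eq_zero_of_linear_system hclam ?_ ?_
  · linear_combination heq1 t - hu''0 t - hu'0 t
  · linear_combination heq2 t - hv''0 t

theorem stmt_14 (lam c : ℝ) (hlam : 0 < lam) (hc : 0 < |c|) (hclam : |c| < lam)
    (u v u' v' u'' v'' : ℝ → ℝ)
    (hu : ∀ t, HasDerivAt u (u' t) t) (hu' : ∀ t, HasDerivAt u' (u'' t) t)
    (hv : ∀ t, HasDerivAt v (v' t) t) (hv' : ∀ t, HasDerivAt v' (v'' t) t)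
    (heq1 : ∀ t, u'' t + u' t + lam * u t + c * v t = 0)
    (heq2 : ∀ t, v'' t + lam * v t + c * u t = 0)
    (hE : ∀ t : ℝ,
      (1/2) * ((u' t)^2 + (v' t)^2 + lam * ((u t)^2 + (v t)^2)) + c * u t * v t
      = (1/2) * ((u' 0)^2 + (v' 0)^2 + lam * ((u 0)^2 + (v 0)^2)) + c * u 0 * v 0) :
    ∀ t, u t = 0 ∧ v t = 0 :=
  stmt_14_general lam c hc hclam u v u' v' u'' v'' hu hu' hv hv' heq1 heq2 hE
end
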